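/- arXiv:2410.01052 — 8 statements merged into one kernel-verified Lean document; each statement's English description precedes it below -/
import Mathlib

section
/- Let a, b ∈ ℝ with a ≥ 0 and let F = F_{a,b}. Then every point of the plane is eventually periodic under F: for each (x, y) ∈ ℝ² there exist integers n ≥ 0 and m ≥ 1 (depending on (x, y)) such that F^{n+m}(x, y) = F^n(x, y). -/
/-- The piecewise linear map `F_{a,b}(x,y) = (|x| - y + a, x - |y| + b)`. -/
noncomputable def F (a b : ℝ) : ℝ × ℝ → ℝ × ℝ :=
  fun p => (|p.1| - p.2 + a, p.1 - |p.2| + b)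

lemma it2 (f : ℝ × ℝ → ℝ × ℝ) (p) : f^[2] p = f (f p) := rfl
lemma it3 (f : ℝ × ℝ → ℝ × ℝ) (p) : f^[3] p = f (f (f p)) := rfl
lemma it4 (f : ℝ × ℝ → ℝ × ℝ) (p) : f^[4] p = f (f (f (f p))) := rfl

/-- Eventually periodic with period 3. -/
def EP (a b : ℝ) (p : ℝ × ℝ) : Prop := ∃ n, (F a b)^[n + 3] p = (F a b)^[n] p

lemma EP_iter (a b : ℝ) (k : ℕ) (p : ℝ × ℝ) (h : EP a b ((F a b)^[k] p)) : EP a b p := by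
  obtain ⟨n, hn⟩ := h
  refine ⟨n + k, ?_⟩
  have h1 : n + k + 3 = (n + 3) + k := by omega
  rw [h1, Function.iterate_add_apply, hn, ← Function.iterate_add_apply]

lemma EP_shift (a b : ℝ) (p : ℝ × ℝ) (h : EP a b (F a b p)) : EP a b p :=
  EP_iter a b 1 p (by simpa using h)

lemma EP_land (a b : ℝ) (k : ℕ) (p q : ℝ × ℝ) (h3 : (F a b)^[3] q = q)
    (hk : (F a b)^[k] p = q) : EP a b p :=
  ⟨k, by rw [add_comm, Function.iterate_add_apply, hk, h3]⟩

lemma FQ1 (a b x y : ℝ) (hx : 0 ≤ x) (hy : 0 ≤ y) :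
    F a b (x, y) = (x - y + a, x - y + b) := by
  simp only [F, abs_of_nonneg hx, abs_of_nonneg hy]

lemma FQ2 (a b x y : ℝ) (hx : x ≤ 0) (hy : 0 ≤ y) :
    F a b (x, y) = (-x - y + a, x - y + b) := by
  simp only [F, abs_of_nonpos hx, abs_of_nonneg hy]

lemma FQ3 (a b x y : ℝ) (hx : x ≤ 0) (hy : y ≤ 0) :
    F a b (x, y) = (-x - y + a, x + y + b) := by
  simp only [F, abs_of_nonpos hx, abs_of_nonpos hy, Prod.mk.injEq]
  refine ⟨trivial, ?_⟩; ring

lemma FQ4 (a b x y : ℝ) (hx : 0 ≤ x) (hy : y ≤ 0) :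
    F a b (x, y) = (x - y + a, x + y + b) := by
  simp only [F, abs_of_nonneg hx, abs_of_nonpos hy, Prod.mk.injEq]
  refine ⟨trivial, ?_⟩; ring

lemma H1 (a b x y : ℝ) (ha : 0 ≤ a) (hx : 0 ≤ x) (hy : 0 ≤ y)
    (hu : 0 ≤ x - y + a) (hd : a - b ≤ x - y) :
    (F a b)^[2] (x, y) = (2*a - b, a) := by
  rw [it2, FQ1 a b x y hx hy, FQ1 a b _ _ hu (by linarith)]
  simp only [Prod.mk.injEq]; constructor <;> ring

lemma Pfix (a b : ℝ) (ha : 0 ≤ a) : (F a b)^[3] (2*a - b, a) = (2*a - b, a) := by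
  rcases le_total b (2*a) with h | h
  · have e : F a b (2*a - b, a) = (2*a - b, a) := by
      rw [FQ1 a b _ _ (by linarith) ha]
      simp only [Prod.mk.injEq]; constructor <;> ring
    rw [it3, e, e, e]
  · have e1 : F a b (2*a - b, a) = (b - 2*a, a) := by
      rw [FQ2 a b _ _ (by linarith) ha]
      simp only [Prod.mk.injEq]; constructor <;> ring
    have e2 : F a b (b - 2*a, a) = (b - 2*a, 2*b - 3*a) := by
      rw [FQ1 a b _ _ (by linarith) ha]
      simp only [Prod.mk.injEq]; constructor <;> ring
    have e3 : F a b (b - 2*a, 2*b - 3*a) = (2*a - b, a) := by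
      rw [FQ1 a b _ _ (by linarith) (by linarith)]
      simp only [Prod.mk.injEq]; constructor <;> ring
    rw [it3, e1, e2, e3]

lemma T2 (a b x y : ℝ) (ha : 0 ≤ a) (hx : 0 ≤ x) (hy : 0 ≤ y)
    (hu : x - y + a ≤ 0) (hd : a - b ≤ x - y) :
    (F a b)^[2] (x, y) = (-2*(x-y) - b, a) := by
  rw [it2, FQ1 a b x y hx hy, FQ2 a b _ _ hu (by linarith)]
  simp only [Prod.mk.injEq]; constructor <;> ring

lemma T3 (a b x y : ℝ) (ha : 0 ≤ a) (hx : 0 ≤ x) (hy : 0 ≤ y)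
    (hu : x - y + a ≤ 0) (hd : a - b ≤ x - y) (h2 : 0 ≤ 2*(x-y) + b) :
    (F a b)^[3] (x, y) = (2*(x-y) + b, -2*(x-y) - a) := by
  have e2 := T2 a b x y ha hx hy hu hd
  have e3 : F a b (-2*(x-y) - b, a) = (2*(x-y) + b, -2*(x-y) - a) := by
    rw [FQ2 a b _ _ (by linarith) ha]
    simp only [Prod.mk.injEq]; constructor <;> ring
  have : (3:ℕ) = 1 + 2 := rfl
  rw [this, Function.iterate_add_apply, e2, Function.iterate_one, e3]

lemma q0fix (a b : ℝ) (ha : 0 ≤ a) (hb : 2*a ≤ b) :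
    (F a b)^[3] ((b-2*a)/3, (2*b-a)/3) = ((b-2*a)/3, (2*b-a)/3) := by
  have e1 : F a b ((b-2*a)/3, (2*b-a)/3) = ((2*a-b)/3, (2*b-a)/3) := by
    rw [FQ1 a b _ _ (by linarith) (by linarith)]
    simp only [Prod.mk.injEq]; constructor <;> ring
  have e2 : F a b ((2*a-b)/3, (2*b-a)/3) = ((2*a-b)/3, a) := by
    rw [FQ2 a b _ _ (by linarith) (by linarith)]
    simp only [Prod.mk.injEq]; constructor <;> ring
  have e3 : F a b ((2*a-b)/3, a) = ((b-2*a)/3, (2*b-a)/3) := by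
    rw [FQ2 a b _ _ (by linarith) ha]
    simp only [Prod.mk.injEq]; constructor <;> ring
  rw [it3, e1, e2, e3]

lemma Q1pos (a b x y : ℝ) (ha : 0 ≤ a) (hx : 0 ≤ x) (hy : 0 ≤ y)
    (hu : 0 ≤ x - y + a) (hd : a - b ≤ x - y) : EP a b (x, y) :=
  EP_land a b 2 _ _ (Pfix a b ha) (H1 a b x y ha hx hy hu hd)

lemma K1 (a b : ℝ) (ha : 0 ≤ a) (hb : 2*a < b) :
    ∀ N : ℕ, ∀ x y : ℝ, 0 ≤ x → 0 ≤ y → a - b ≤ x - y →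
    (b - 2*a)^2 < 4^N * (9 * (x - y + a + (b - 2*a)/3)^2) → EP a b (x, y) := by
  intro N
  induction N with
  | zero =>
    intro x y hx hy hd hbd
    rcases le_or_gt 0 (x - y + a) with hu | hu
    · exact Q1pos a b x y ha hx hy hu hd
    rcases le_or_gt (2*(x-y) + b) 0 with h2 | h2
    · -- x₂ = -2(x-y)-b ≥ 0 : four steps to (2a-b, a)
      have e2 := T2 a b x y ha hx hy hu.le hd
      have e4 : (F a b)^[4] (x, y) = (2*a - b, a) := by
        have h4 : (4:ℕ) = 2 + 2 := rfl
        rw [h4, Function.iterate_add_apply, e2]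
        exact H1 a b _ _ ha (by linarith) ha (by linarith) (by linarith)
      exact EP_land a b 4 _ _ (Pfix a b ha) e4
    · -- impossible at N = 0
      exfalso
      have hβ : 0 < b - 2*a := by linarith
      nlinarith [sq_nonneg (x - y + a + (b-2*a)/3), sq_nonneg (x - y + a)]
  | succ N ih =>
    intro x y hx hy hd hbd
    rcases le_or_gt 0 (x - y + a) with hu | hu
    · exact Q1pos a b x y ha hx hy hu hd
    rcases le_or_gt (2*(x-y) + b) 0 with h2 | h2
    · have e2 := T2 a b x y ha hx hy hu.le hd
      have e4 : (F a b)^[4] (x, y) = (2*a - b, a) := by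
        have h4 : (4:ℕ) = 2 + 2 := rfl
        rw [h4, Function.iterate_add_apply, e2]
        exact H1 a b _ _ ha (by linarith) ha (by linarith) (by linarith)
      exact EP_land a b 4 _ _ (Pfix a b ha) e4
    · have e3 := T3 a b x y ha hx hy hu.le hd h2.le
      apply EP_iter a b 3
      rw [e3]
      apply ih _ _ (by linarith) (by linarith) (by linarith)
      have key : (2*(x-y)+b) - (-2*(x-y)-a) + a + (b-2*a)/3
          = 4 * (x - y + a + (b-2*a)/3) := by ring
      rw [key]
      have hp : (0:ℝ) < 4^N := by positivity
      have : (4:ℝ)^(N+1) * (9 * (x - y + a + (b - 2*a)/3)^2)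
          ≤ 4^N * (9 * (4*(x - y + a + (b-2*a)/3))^2) := by
        rw [pow_succ]
        nlinarith [sq_nonneg (x - y + a + (b-2*a)/3)]
      linarith

lemma Q1_EP (a b x y : ℝ) (ha : 0 ≤ a) (hx : 0 ≤ x) (hy : 0 ≤ y)
    (hd : a - b ≤ x - y) : EP a b (x, y) := by
  rcases le_or_gt 0 (x - y + a) with hu | hu
  · exact Q1pos a b x y ha hx hy hu hd
  have hb : 2*a < b := by linarith
  rcases eq_or_ne (x - y + a + (b - 2*a)/3) 0 with hw | hw
  · -- lands exactly on the period-3 point q₀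
    have e3 := T3 a b x y ha hx hy hu.le hd (by linarith)
    have : (2*(x-y) + b, -2*(x-y) - a) = ((b-2*a)/3, (2*b-a)/3) := by
      have h1 : x - y = -a - (b-2*a)/3 := by linarith
      rw [h1]; simp only [Prod.mk.injEq]; constructor <;> ring
    rw [this] at e3
    exact EP_land a b 3 _ _ (q0fix a b ha hb.le) e3
  · have hw2 : (0:ℝ) < 9 * (x - y + a + (b - 2*a)/3)^2 := by positivity
    obtain ⟨N, hN⟩ := pow_unbounded_of_one_lt ((b-2*a)^2 / (9 * (x - y + a + (b - 2*a)/3)^2))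
      (by norm_num : (1:ℝ) < 4)
    refine K1 a b ha hb N x y hx hy hd ?_
    calc (b-2*a)^2 = (b-2*a)^2 / (9 * (x - y + a + (b - 2*a)/3)^2)
        * (9 * (x - y + a + (b - 2*a)/3)^2) := (div_mul_cancel₀ _ (ne_of_gt hw2)).symm
      _ < 4^N * (9 * (x - y + a + (b - 2*a)/3)^2) := by
          apply mul_lt_mul_of_pos_right hN hw2

lemma K2 (a b : ℝ) (ha : 0 ≤ a) (hb : 0 < b) :
    ∀ N : ℕ, ∀ x y : ℝ, x ≤ 0 → 0 ≤ y → a - b ≤ x - y →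
    (b + (2*a+b)/5)^2 + (b/2 + (a+2*b)/5)^2
      < 2^N * ((x - (2*a-b)/5)^2 + (y - (a+2*b)/5)^2) → EP a b (x, y) := by
  intro N
  induction N with
  | zero =>
    intro x y hx hy hd hbd
    have hy1 : (0:ℝ) ≤ x - y + b := by linarith
    have e1 : F a b (x, y) = (-x - y + a, x - y + b) := FQ2 a b x y hx hy
    rcases le_or_gt 0 (-x - y + a) with h1 | h1
    · exact EP_shift a b _ (by rw [e1]; exact Q1_EP a b _ _ ha h1 hy1 (by linarith))
    -- q₁ ∈ Q2
    have e2 : F a b (-x - y + a, x - y + b) = (2*y - b, -2*x + a) := by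
      rw [FQ2 a b _ _ h1.le hy1]
      simp only [Prod.mk.injEq]; constructor <;> ring
    rcases le_or_gt 0 (2*y - b) with h2 | h2
    · refine EP_iter a b 2 _ ?_
      rw [it2, e1, e2]
      exact Q1_EP a b _ _ ha h2 (by linarith) (by linarith)
    have e3 : F a b (2*y - b, -2*x + a) = (2*x - 2*y + b, 2*x + 2*y - a) := by
      rw [FQ2 a b _ _ h2.le (by linarith)]
      simp only [Prod.mk.injEq]; constructor <;> ring
    rcases le_or_gt 0 (2*x - 2*y + b) with h3 | h3
    · refine EP_iter a b 3 _ ?_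
      rw [it3, e1, e2, e3]
      exact Q1_EP a b _ _ ha h3 (by linarith) (by linarith)
    have e4 : F a b (2*x - 2*y + b, 2*x + 2*y - a) = (-4*x + 2*a - b, -4*y + a + 2*b) := by
      rw [FQ2 a b _ _ h3.le (by linarith)]
      simp only [Prod.mk.injEq]; constructor <;> ring
    rcases le_or_gt 0 (-4*x + 2*a - b) with h4 | h4
    · refine EP_iter a b 4 _ ?_
      rw [it4, e1, e2, e3, e4]
      exact Q1_EP a b _ _ ha h4 (by linarith) (by linarith)
    -- contradiction: bounded region but norm quadrupled
    exfalso
    have hq : (2*y - b - (2*a-b)/5)^2 + (-2*x + a - (a+2*b)/5)^2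
        = 4 * ((x - (2*a-b)/5)^2 + (y - (a+2*b)/5)^2) := by ring
    -- bounds: -b ≤ 2y-b ≤ 0, 0 ≤ -2x+a < b/2
    have hx2a : -b ≤ 2*y - b := by linarith
    have hx2b : 2*y - b < 0 := h2
    have hy2a : (0:ℝ) ≤ -2*x + a := by linarith
    have hy2b : -2*x + a < b/2 := by linarith
    have hb1 : (2*y - b - (2*a-b)/5)^2 ≤ (b + (2*a+b)/5)^2 := by nlinarith
    have hb2 : (-2*x + a - (a+2*b)/5)^2 ≤ (b/2 + (a+2*b)/5)^2 := by nlinarith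
    have hC : (0:ℝ) ≤ (b + (2*a+b)/5)^2 + (b/2 + (a+2*b)/5)^2 := by positivity
    simp only [pow_zero, one_mul] at hbd
    nlinarith
  | succ N ih =>
    intro x y hx hy hd hbd
    have hy1 : (0:ℝ) ≤ x - y + b := by linarith
    have e1 : F a b (x, y) = (-x - y + a, x - y + b) := FQ2 a b x y hx hy
    rcases le_or_gt 0 (-x - y + a) with h1 | h1
    · exact EP_shift a b _ (by rw [e1]; exact Q1_EP a b _ _ ha h1 hy1 (by linarith))
    refine EP_shift a b _ ?_
    rw [e1]
    apply ih _ _ h1.le hy1 (by linarith)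
    have hD : (-x - y + a - (2*a-b)/5)^2 + (x - y + b - (a+2*b)/5)^2
        = 2 * ((x - (2*a-b)/5)^2 + (y - (a+2*b)/5)^2) := by ring
    rw [hD]
    have he : (2:ℝ)^(N+1) * ((x - (2*a-b)/5)^2 + (y - (a+2*b)/5)^2)
        = 2^N * (2 * ((x - (2*a-b)/5)^2 + (y - (a+2*b)/5)^2)) := by
      rw [pow_succ]; ring
    linarith

lemma Q2_EP (a b x y : ℝ) (ha : 0 ≤ a) (hx : x ≤ 0) (hy : 0 ≤ y)
    (hd : a - b ≤ x - y) : EP a b (x, y) := by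
  have hy1 : (0:ℝ) ≤ x - y + b := by linarith
  have e1 : F a b (x, y) = (-x - y + a, x - y + b) := FQ2 a b x y hx hy
  rcases le_or_gt 0 (-x - y + a) with h1 | h1
  · exact EP_shift a b _ (by rw [e1]; exact Q1_EP a b _ _ ha h1 hy1 (by linarith))
  rcases le_or_gt b 0 with hb | hb
  · -- b ≤ 0 : two steps to Q1
    have e2 : F a b (-x - y + a, x - y + b) = (2*y - b, -2*x + a) := by
      rw [FQ2 a b _ _ h1.le hy1]
      simp only [Prod.mk.injEq]; constructor <;> ring
    refine EP_iter a b 2 _ ?_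
    rw [it2, e1, e2]
    exact Q1_EP a b _ _ ha (by linarith) (by linarith) (by linarith)
  -- 0 < b
  rcases eq_or_ne (x, y) ((2*a-b)/5, (a+2*b)/5) with hfix | hfix
  · -- exactly the Q2 fixed point
    have hxv : x = (2*a-b)/5 := congrArg Prod.fst hfix
    have hyv : y = (a+2*b)/5 := congrArg Prod.snd hfix
    have ef : F a b (x, y) = (x, y) := by
      rw [e1, hxv, hyv]; simp only [Prod.mk.injEq]; constructor <;> ring
    exact ⟨0, by rw [it3, ef, ef, ef, Function.iterate_zero, id_eq]⟩
  · have hr : 0 < (x - (2*a-b)/5)^2 + (y - (a+2*b)/5)^2 := by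
      by_contra h
      push_neg at h
      have hx0 : x = (2*a-b)/5 := by
        nlinarith [sq_nonneg (x - (2*a-b)/5), sq_nonneg (y - (a+2*b)/5)]
      have hy0 : y = (a+2*b)/5 := by
        nlinarith [sq_nonneg (x - (2*a-b)/5), sq_nonneg (y - (a+2*b)/5)]
      exact hfix (by rw [hx0, hy0])
    obtain ⟨N, hN⟩ := pow_unbounded_of_one_lt
      (((b + (2*a+b)/5)^2 + (b/2 + (a+2*b)/5)^2) / ((x - (2*a-b)/5)^2 + (y - (a+2*b)/5)^2))
      (by norm_num : (1:ℝ) < 2)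
    refine K2 a b ha hb N x y hx hy hd ?_
    calc (b + (2*a+b)/5)^2 + (b/2 + (a+2*b)/5)^2
        = ((b + (2*a+b)/5)^2 + (b/2 + (a+2*b)/5)^2) / ((x - (2*a-b)/5)^2 + (y - (a+2*b)/5)^2)
          * ((x - (2*a-b)/5)^2 + (y - (a+2*b)/5)^2) := (div_mul_cancel₀ _ (ne_of_gt hr)).symm
      _ < 2^N * ((x - (2*a-b)/5)^2 + (y - (a+2*b)/5)^2) := mul_lt_mul_of_pos_right hN hr

lemma K4 (a b : ℝ) (ha : 0 < a) :
    ∀ N : ℕ, ∀ x y : ℝ, 0 ≤ x → y ≤ 0 → -(a + 2*b)/2 < x + N*a → EP a b (x, y) := by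
  intro N
  induction N with
  | zero =>
    intro x y hx hy hbd
    have e1 : F a b (x, y) = (x - y + a, x + y + b) := FQ4 a b x y hx hy
    rcases le_or_gt 0 (x + y + b) with h1 | h1
    · refine EP_shift a b _ ?_
      rw [e1]
      exact Q1_EP a b _ _ ha.le (by linarith) h1 (by linarith)
    have e2 : F a b (x - y + a, x + y + b) = (-2*y + 2*a - b, 2*x + a + 2*b) := by
      rw [FQ4 a b _ _ (by linarith) h1.le]
      simp only [Prod.mk.injEq]; constructor <;> ring
    have h2 : (0:ℝ) ≤ 2*x + a + 2*b := by
      simp only [Nat.cast_zero, zero_mul, add_zero] at hbd; linarith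
    refine EP_iter a b 2 _ ?_
    rw [it2, e1, e2]
    exact Q1_EP a b _ _ ha.le (by linarith) h2 (by linarith)
  | succ N ih =>
    intro x y hx hy hbd
    have e1 : F a b (x, y) = (x - y + a, x + y + b) := FQ4 a b x y hx hy
    rcases le_or_gt 0 (x + y + b) with h1 | h1
    · refine EP_shift a b _ ?_
      rw [e1]
      exact Q1_EP a b _ _ ha.le (by linarith) h1 (by linarith)
    refine EP_shift a b _ ?_
    rw [e1]
    apply ih _ _ (by linarith) h1.le
    push_cast at hbd ⊢
    nlinarith

lemma Q4_EP (a b x y : ℝ) (ha : 0 ≤ a) (hx : 0 ≤ x) (hy : y ≤ 0) : EP a b (x, y) := by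
  rcases ha.lt_or_eq with ha' | ha'
  · -- 0 < a : Archimedean
    obtain ⟨N, hN⟩ := exists_nat_gt ((-(a + 2*b)/2 - x)/a)
    refine K4 a b ha' N x y hx hy ?_
    have := (div_lt_iff₀ ha').mp hN
    linarith
  · -- a = 0
    subst ha'
    have e1 : F 0 b (x, y) = (x - y, x + y + b) := by
      rw [FQ4 0 b x y hx hy]; simp only [Prod.mk.injEq]; refine ⟨?_, trivial⟩; ring
    rcases le_or_gt 0 (x + y + b) with h1 | h1
    · refine EP_shift 0 b _ ?_
      rw [e1]
      exact Q1_EP 0 b _ _ le_rfl (by linarith) h1 (by linarith)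
    have e2 : F 0 b (x - y, x + y + b) = (-2*y - b, 2*x + 2*b) := by
      rw [FQ4 0 b _ _ (by linarith) h1.le]
      simp only [Prod.mk.injEq]; constructor <;> ring
    have hx2 : (0:ℝ) ≤ -2*y - b := by linarith
    rcases le_or_gt 0 (2*x + 2*b) with h2 | h2
    · refine EP_iter 0 b 2 _ ?_
      rw [it2, e1, e2]
      exact Q1_EP 0 b _ _ le_rfl hx2 h2 (by linarith)
    have e3 : F 0 b (-2*y - b, 2*x + 2*b) = (-2*x - 2*y - 3*b, 2*x - 2*y + 2*b) := by
      rw [FQ4 0 b _ _ hx2 h2.le]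
      simp only [Prod.mk.injEq]; constructor <;> ring
    have hx3 : (0:ℝ) ≤ -2*x - 2*y - 3*b := by linarith
    rcases le_or_gt 0 (2*x - 2*y + 2*b) with h3 | h3
    · refine EP_iter 0 b 3 _ ?_
      rw [it3, e1, e2, e3]
      exact Q1_EP 0 b _ _ le_rfl hx3 h3 (by linarith)
    have e4 : F 0 b (-2*x - 2*y - 3*b, 2*x - 2*y + 2*b) = (-4*x - 5*b, -4*y) := by
      rw [FQ4 0 b _ _ hx3 h3.le]
      simp only [Prod.mk.injEq]; constructor <;> ring
    refine EP_iter 0 b 4 _ ?_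
    rw [it4, e1, e2, e3, e4]
    exact Q1_EP 0 b _ _ le_rfl (by linarith) (by linarith) (by linarith)

lemma main_EP (a b : ℝ) (ha : 0 ≤ a) (q : ℝ × ℝ) (hd : a - b ≤ q.1 - q.2) :
    EP a b q := by
  obtain ⟨x, y⟩ := q
  simp only at hd
  rcases le_or_gt 0 y with hy | hy
  · rcases le_or_gt 0 x with hx | hx
    · exact Q1_EP a b x y ha hx hy hd
    · exact Q2_EP a b x y ha hx.le hy hd
  · rcases le_or_gt 0 x with hx | hx
    · exact Q4_EP a b x y ha hx hy.le
    · have e1 : F a b (x, y) = (-x - y + a, x + y + b) := FQ3 a b x y hx.le hy.le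
      rcases le_or_gt 0 (x + y + b) with h1 | h1
      · refine EP_shift a b _ ?_
        rw [e1]
        exact Q1_EP a b _ _ ha (by linarith) h1 (by linarith)
      · refine EP_shift a b _ ?_
        rw [e1]
        exact Q4_EP a b _ _ ha (by linarith) h1.le

lemma dge (a b : ℝ) (p : ℝ × ℝ) : a - b ≤ (F a b p).1 - (F a b p).2 := by
  simp only [F]
  have := le_abs_self p.1
  have := le_abs_self p.2
  linarith

/-- For `a ≥ 0`, every point of the plane is eventually periodic under `F_{a,b}`. -/
theorem eventually_periodic_of_nonneg (a b : ℝ) (ha : 0 ≤ a) (x : ℝ × ℝ) :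
    ∃ n m : ℕ, 1 ≤ m ∧ (F a b)^[n + m] x = (F a b)^[n] x := by
  obtain ⟨n, hn⟩ := EP_shift a b x (main_EP a b ha (F a b x) (dge a b x))
  exact ⟨n, 3, by norm_num, hn⟩
end

section
/- Let a, b ∈ ℝ with a ≥ 0 and let F = F_{a,b}. Then F has exactly one fixed point, every periodic point p of F satisfies F^3(p) = p (so every periodic orbit has minimal period 1 or 3), and the set of all periodic points of F has at most 7 elements. -/
/-!
Write `F^[n] p = (xₙ, yₙ)`. Every image point satisfies `x - y ≥ a - b`, on that half-plane `F`
preserves `y ≥ 0`, and on `x ≥ 0 > y` it is the affine map `(x, y) ↦ (x - y + a, x + y + b)`,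
which doubles the squared distance to `(-b, a)`. Hence `yₙ ≥ 0` along a periodic orbit, and then
`yₙ = |xₙ| + a - xₙ₊₁` turns the orbit into the recurrence
`xₙ₊₂ = (|xₙ₊₁| - xₙ₊₁) + (|xₙ| - xₙ) + c` with `c = 2a - b`, the point being determined by
`(x₀, x₁)`.

A periodic solution of this recurrence has period 3. For `c ≥ 0` it is constant. For `c < 0`:
two consecutive nonnegative terms start the cycle `(c, -c, -c)`; if nonnegative terms occur but
are isolated, the terms just after them move away from `c / 3` by the factor 4 every three steps,
so they equal `c / 3` and the cycle is `(c / 3, c / 3, -c / 3)`; if all terms are negative the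
recurrence is linear and expanding about `c / 5`. The 3-periodic solutions are then found sign
pattern by sign pattern, leaving at most seven pairs `(x₀, x₁)`.
-/

open Function Filter

namespace Function.Periodic

variable {α : Type*} {u : ℕ → α} {N : ℕ}

theorem forall_of_eventually (hu : Periodic u N) (hN : 0 < N) {P : α → Prop}
    (h : ∀ᶠ n in atTop, P (u n)) (n : ℕ) : P (u n) := by
  obtain ⟨m, hm⟩ := eventually_atTop.1 h
  rw [← hu.nat_mul m n]
  exact hm _ (le_add_left (Nat.le_mul_of_pos_right m hN))

theorem of_eventually (hu : Periodic u N) (hN : 0 < N) {M : ℕ}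
    (h : ∀ᶠ n in atTop, u (n + M) = u n) : Periodic u M := by
  have hpair : Periodic (fun n => (u n, u (n + M))) N := fun n => by
    simp only [add_right_comm n N M, hu _]
  exact hpair.forall_of_eventually hN (P := fun q => q.2 = q.1) h

theorem eq_zero_of_apply_add_one_eq_mul {q : ℕ → ℝ} {r : ℝ} (hq : Periodic q N) (hN : 0 < N)
    (hr : 1 < r) (h : ∀ n, q (n + 1) = r * q n) (n : ℕ) : q n = 0 := by
  have hpow : ∀ k, q (n + k) = r ^ k * q n := fun k => by
    induction k with
    | zero => simp
    | succ k ih => rw [← add_assoc, h, ih, pow_succ']; ring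
  have hrN : r ^ N ≠ 1 := (one_lt_pow₀ hr hN.ne').ne'
  have hfix : (r ^ N - 1) * q n = 0 := by linarith [hq n ▸ hpow N]
  exact (mul_eq_zero.1 hfix).resolve_left (sub_ne_zero.2 hrN)

end Function.Periodic

def AbsRec (c : ℝ) (u : ℕ → ℝ) : Prop :=
  ∀ n, u (n + 2) = |u (n + 1)| - u (n + 1) + |u n| - u n + c

namespace AbsRec

variable {c : ℝ} {u : ℕ → ℝ} {N : ℕ}

theorem le_apply_add_two (hu : AbsRec c u) (n : ℕ) : c ≤ u (n + 2) := by
  rw [hu n]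
  linarith [le_abs_self (u n), le_abs_self (u (n + 1))]

theorem add_three_eq (hu : AbsRec c u) {m : ℕ} (h3 : u (m + 3) = u m) (h4 : u (m + 4) = u (m + 1))
    (n : ℕ) (hn : m ≤ n) : u (n + 3) = u n ∧ u (n + 4) = u (n + 1) := by
  induction n, hn using Nat.le_induction with
  | base => exact ⟨h3, h4⟩
  | succ n _ ih => exact ⟨ih.2, by rw [hu (n + 3), hu n, ih.1, ih.2]⟩

theorem periodic_three_of_eq (hu : AbsRec c u) (hper : Periodic u N) (hN : 0 < N) {m : ℕ}
    (h3 : u (m + 3) = u m) (h4 : u (m + 4) = u (m + 1)) : Periodic u 3 :=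
  hper.of_eventually hN (eventually_atTop.2 ⟨m, fun n hn => (hu.add_three_eq h3 h4 n hn).1⟩)

theorem apply_eq_of_nonneg (hu : AbsRec c u) (hper : Periodic u N) (hN : 0 < N) (hc : 0 ≤ c)
    (n : ℕ) : u n = c := by
  have hge : ∀ n, c ≤ u n := hper.forall_of_eventually hN (eventually_atTop.2
    ⟨2, fun n hn => by obtain ⟨k, rfl⟩ := Nat.exists_eq_add_of_le' hn; exact hu.le_apply_add_two k⟩)
  refine hper.forall_of_eventually hN (P := (· = c)) (eventually_atTop.2 ⟨2, fun n hn => ?_⟩) n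
  obtain ⟨k, rfl⟩ := Nat.exists_eq_add_of_le' hn
  rw [hu k, abs_of_nonneg (hc.trans (hge _)), abs_of_nonneg (hc.trans (hge _))]
  ring

theorem apply_eq_of_forall_neg (hu : AbsRec c u) (hper : Periodic u N) (hN : 0 < N)
    (hneg : ∀ n, u n < 0) (n : ℕ) : u n = c / 5 := by
  -- `(w₀, w₁) ↦ (w₁, -2 w₁ - 2 w₀)`, the recurrence for `wₙ = uₙ - c / 5`, doubles this form
  set q : ℕ → ℝ := fun n => (u n - c / 5) ^ 2 + (u n + u (n + 1) - 2 * c / 5) ^ 2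
  have hq : Periodic q N := fun n => by simp only [q, add_right_comm n N 1, hper _]
  have hexp : ∀ n, q (n + 1) = 2 * q n := fun n => by
    simp only [q, hu n, abs_of_neg (hneg n), abs_of_neg (hneg (n + 1))]
    ring
  have hzero : (u n - c / 5) ^ 2 + (u n + u (n + 1) - 2 * c / 5) ^ 2 = 0 :=
    hq.eq_zero_of_apply_add_one_eq_mul hN one_lt_two hexp n
  nlinarith [sq_nonneg (u n - c / 5), sq_nonneg (u n + u (n + 1) - 2 * c / 5)]

theorem periodic_three_of_nonneg_pair (hc : c < 0) (hu : AbsRec c u) (hper : Periodic u N)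
    (hN : 0 < N) {m : ℕ} (h0 : 0 ≤ u m) (h1 : 0 ≤ u (m + 1)) : Periodic u 3 := by
  have e2 : u (m + 2) = c := by rw [hu, abs_of_nonneg h0, abs_of_nonneg h1]; ring
  have e3 : u (m + 3) = -c := by rw [hu, e2, abs_of_neg hc, abs_of_nonneg h1]; ring
  have e4 : u (m + 4) = -c := by rw [hu, e2, e3, abs_of_neg hc, abs_of_nonneg (by linarith)]; ring
  have e5 : u (m + 5) = c := by rw [hu, e3, e4, abs_of_nonneg (by linarith)]; ring
  have e6 : u (m + 6) = -c := by rw [hu, e4, e5, abs_of_neg hc, abs_of_nonneg (by linarith)]; ring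
  exact hu.periodic_three_of_eq hper hN (m := m + 2) (e5.trans e2.symm) (e6.trans e3.symm)

theorem add_three_nonneg_and_add_four_sub_eq (hc : c < 0) (hu : AbsRec c u)
    (hiso : ∀ n, 0 ≤ u n → u (n + 1) < 0) {m : ℕ} (h0 : 0 ≤ u m) :
    0 ≤ u (m + 3) ∧ u (m + 4) - c / 3 = 4 * (u (m + 1) - c / 3) := by
  have h1 := hiso m h0
  have e2 : u (m + 2) = -2 * u (m + 1) + c := by rw [hu, abs_of_nonneg h0, abs_of_neg h1]; ring
  have h2 : u (m + 2) < 0 := by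
    by_contra! h2
    have e3 : u (m + 3) = u (m + 2) := by rw [hu, abs_of_nonneg h2, abs_of_neg h1, e2]; ring
    exact (hiso _ h2).not_ge (e3 ▸ h2)
  have h3 : 0 ≤ u (m + 3) := by
    by_contra! h3
    have e3 : u (m + 3) = -2 * u (m + 2) - 2 * u (m + 1) + c := by
      rw [hu, abs_of_neg h2, abs_of_neg h1]; ring
    have e4 : u (m + 4) = c := by rw [hu, abs_of_neg h3, abs_of_neg h2]; linarith
    have h5 : 0 ≤ u (m + 5) := by rw [hu, e4, abs_of_neg hc, abs_of_neg h3]; linarith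
    have e6 : u (m + 6) = -c := by rw [hu, e4, abs_of_nonneg h5, abs_of_neg hc]; ring
    exact (hiso _ h5).not_ge (by rw [e6]; linarith)
  have e4 : u (m + 4) = -2 * u (m + 2) + c := by rw [hu, abs_of_nonneg h3, abs_of_neg h2]; ring
  exact ⟨h3, by rw [e4, e2]; ring⟩

theorem periodic_three_of_nonneg_isolated (hc : c < 0) (hu : AbsRec c u) (hper : Periodic u N)
    (hN : 0 < N) (hiso : ∀ n, 0 ≤ u n → u (n + 1) < 0) {m : ℕ} (h0 : 0 ≤ u m) : Periodic u 3 := by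
  have hnn : ∀ k, 0 ≤ u (m + 3 * k) := fun k => by
    induction k with
    | zero => exact h0
    | succ k ih => exact (hu.add_three_nonneg_and_add_four_sub_eq hc hiso ih).1
  set q : ℕ → ℝ := fun k => u (m + 3 * k + 1) - c / 3
  have hq : Periodic q N := fun k => by
    simp only [q, show m + 3 * (k + N) + 1 = m + 3 * k + 1 + 3 * N by ring]
    exact congrArg (· - c / 3) (hper.nat_mul 3 _)
  have hexp : ∀ k, q (k + 1) = 4 * q k := fun k => by
    simp only [q]
    rw [show m + 3 * (k + 1) + 1 = m + 3 * k + 4 by ring]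
    exact (hu.add_three_nonneg_and_add_four_sub_eq hc hiso (hnn k)).2
  have e1 : u (m + 1) = c / 3 := by
    have := hq.eq_zero_of_apply_add_one_eq_mul hN (by norm_num) hexp 0
    simp only [q, mul_zero, add_zero] at this
    linarith
  have hc3 : c / 3 < 0 := by linarith
  have e2 : u (m + 2) = c / 3 := by rw [hu, e1, abs_of_nonneg h0, abs_of_neg hc3]; ring
  have e3 : u (m + 3) = -c / 3 := by rw [hu, e1, e2, abs_of_neg hc3]; ring
  have e4 : u (m + 4) = c / 3 := by
    rw [hu, e2, e3, abs_of_neg hc3, abs_of_nonneg (by linarith)]; ring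
  have e5 : u (m + 5) = c / 3 := by
    rw [hu, e3, e4, abs_of_neg hc3, abs_of_nonneg (by linarith)]; ring
  exact hu.periodic_three_of_eq hper hN (m := m + 1) (e4.trans e1.symm) (e5.trans e2.symm)

theorem periodic_three (hu : AbsRec c u) (hper : Periodic u N) (hN : 0 < N) : Periodic u 3 := by
  rcases le_or_gt 0 c with hc | hc
  · have hconst := hu.apply_eq_of_nonneg hper hN hc
    exact fun n => by rw [hconst, hconst]
  by_cases hpair : ∃ m, 0 ≤ u m ∧ 0 ≤ u (m + 1)
  · obtain ⟨m, h0, h1⟩ := hpair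
    exact hu.periodic_three_of_nonneg_pair hc hper hN h0 h1
  push Not at hpair
  by_cases hpos : ∃ m, 0 ≤ u m
  · obtain ⟨m, h0⟩ := hpos
    exact hu.periodic_three_of_nonneg_isolated hc hper hN hpair h0
  push Not at hpos
  have hconst := hu.apply_eq_of_forall_neg hper hN hpos
  exact fun n => by rw [hconst, hconst]

end AbsRec

-- for `c < 0`: the fixed point `c / 5` and the rotations of the cycles `(c, -c, -c)` and
-- `(c / 3, c / 3, -c / 3)`
def cycleSeeds (c : ℝ) : Set (ℝ × ℝ) :=
  if 0 ≤ c then {(c, c)} else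
    {(c / 5, c / 5), (c, -c), (-c, -c), (-c, c), (c / 3, c / 3), (c / 3, -c / 3), (-c / 3, c / 3)}

theorem encard_cycleSeeds_le (c : ℝ) : (cycleSeeds c).encard ≤ 7 := by
  unfold cycleSeeds
  split_ifs
  · simp
  · refine Set.encard_le_coe_iff_finite_ncard_le.2 ⟨Set.toFinite _, ?_⟩
    repeat refine (Set.ncard_insert_le _ _).trans (Nat.succ_le_succ ?_)
    simp

theorem AbsRec.mem_cycleSeeds {c : ℝ} {u : ℕ → ℝ} (hu : AbsRec c u) (h3 : Periodic u 3) :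
    (u 0, u 1) ∈ cycleSeeds c := by
  have e2 : u 2 = |u 1| - u 1 + |u 0| - u 0 + c := hu 0
  have e0 : u 0 = |u 2| - u 2 + |u 1| - u 1 + c := h3 0 ▸ hu 1
  have e1 : u 1 = |u 0| - u 0 + |u 2| - u 2 + c := by rw [← h3 1, ← h3 0]; exact hu 2
  unfold cycleSeeds
  -- in each sign pattern of `u 0, u 1, u 2` the three equations are linear with a unique solution
  split_ifs with hc <;> simp only [Set.mem_insert_iff, Set.mem_singleton_iff, Prod.mk.injEq] <;>
  rcases abs_cases (u 0) with ⟨a0, s0⟩ | ⟨a0, s0⟩ <;>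
  rcases abs_cases (u 1) with ⟨a1, s1⟩ | ⟨a1, s1⟩ <;>
  rcases abs_cases (u 2) with ⟨a2, s2⟩ | ⟨a2, s2⟩ <;>
  simp only [a0, a1, a2] at e0 e1 e2 <;> grind

section

variable {a b : ℝ} {N : ℕ}

theorem sub_le_fst_F_sub_snd_F (q : ℝ × ℝ) : a - b ≤ (F a b q).1 - (F a b q).2 := by
  simp only [F]
  linarith [le_abs_self q.1, le_abs_self q.2]

theorem snd_F_nonneg (ha : 0 ≤ a) {q : ℝ × ℝ} (hq : a - b ≤ q.1 - q.2) (hq2 : 0 ≤ q.2) :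
    0 ≤ (F a b q).2 := by
  simp only [F, abs_of_nonneg hq2]
  linarith

theorem sq_add_sq_F_eq_two_mul {q : ℝ × ℝ} (hq1 : 0 ≤ q.1) (hq2 : q.2 < 0) :
    ((F a b q).1 + b) ^ 2 + ((F a b q).2 - a) ^ 2 = 2 * ((q.1 + b) ^ 2 + (q.2 - a) ^ 2) := by
  simp only [F, abs_of_nonneg hq1, abs_of_neg hq2]
  ring

theorem mk_fst_F (q : ℝ × ℝ) : (q.1, |q.1| + a - (F a b q).1) = q := by
  simp only [F]
  ext <;> simp

theorem snd_nonneg_of_periodic (ha : 0 ≤ a) {o : ℕ → ℝ × ℝ} (ho : ∀ n, o (n + 1) = F a b (o n))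
    (hper : Periodic o N) (hN : 0 < N) (n : ℕ) : 0 ≤ (o n).2 := by
  have hR : ∀ n, a - b ≤ (o n).1 - (o n).2 :=
    hper.forall_of_eventually hN (P := fun q => a - b ≤ q.1 - q.2)
      (eventually_atTop.2 ⟨1, fun n hn => by
        obtain ⟨k, rfl⟩ := Nat.exists_eq_add_of_le' hn
        rw [ho k]
        exact sub_le_fst_F_sub_snd_F _⟩)
  by_cases hy : ∃ m, 0 ≤ (o m).2
  · obtain ⟨m, hm⟩ := hy
    refine hper.forall_of_eventually hN (P := fun q => 0 ≤ q.2)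
      (eventually_atTop.2 ⟨m, fun n hn => ?_⟩) n
    induction n, hn using Nat.le_induction with
    | base => exact hm
    | succ n _ ih => exact ho n ▸ snd_F_nonneg ha (hR n) ih
  push Not at hy
  have hx : ∀ n, 0 ≤ (o n).1 := hper.forall_of_eventually hN (P := fun q => 0 ≤ q.1)
    (eventually_atTop.2 ⟨1, fun n hn => by
      obtain ⟨k, rfl⟩ := Nat.exists_eq_add_of_le' hn
      rw [ho k]
      simp only [F]
      linarith [abs_nonneg (o k).1, hy k]⟩)
  have hzero : ((o n).1 + b) ^ 2 + ((o n).2 - a) ^ 2 = 0 :=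
    (hper.comp fun q => (q.1 + b) ^ 2 + (q.2 - a) ^ 2).eq_zero_of_apply_add_one_eq_mul hN
      one_lt_two (fun k => by simp only [comp_apply, ho k, sq_add_sq_F_eq_two_mul (hx k) (hy k)]) n
  nlinarith [sq_nonneg ((o n).1 + b), sq_nonneg ((o n).2 - a), hy n]

theorem absRec_fst {o : ℕ → ℝ × ℝ} (ho : ∀ n, o (n + 1) = F a b (o n)) (hy : ∀ n, 0 ≤ (o n).2) :
    AbsRec (2 * a - b) (fun n => (o n).1) := fun n => by
  simp only [ho, F, abs_of_nonneg (hy n)]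
  ring

theorem iterate_three_and_mem_cycleSeeds (ha : 0 ≤ a) {p : ℝ × ℝ} (hp : (F a b)^[N] p = p)
    (hN : 0 < N) : (F a b)^[3] p = p ∧ (p.1, (F a b p).1) ∈ cycleSeeds (2 * a - b) := by
  set o : ℕ → ℝ × ℝ := fun n => (F a b)^[n] p
  have ho : ∀ n, o (n + 1) = F a b (o n) := fun n => iterate_succ_apply' _ _ _
  have hper : Periodic o N := fun n => by simp only [o, iterate_add_apply, hp]
  have hu := absRec_fst ho (snd_nonneg_of_periodic ha ho hper hN)
  have h3 := hu.periodic_three (hper.comp Prod.fst) hN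
  refine ⟨?_, hu.mem_cycleSeeds h3⟩
  have e3 : (o 3).1 = (o 0).1 := h3 0
  have e4 : (o 4).1 = (o 1).1 := h3 1
  calc (F a b)^[3] p = ((o 3).1, |(o 3).1| + a - (o 4).1) := by rw [ho 3, mk_fst_F]
    _ = p := by rw [e3, e4, ho 0, mk_fst_F]; rfl

theorem F_eq_self_iff (ha : 0 ≤ a) {q : ℝ × ℝ} :
    F a b q = q ↔ q = if b ≤ 2 * a then (2 * a - b, a) else ((2 * a - b) / 5, (a + 2 * b) / 5) := by
  obtain ⟨x, y⟩ := q
  simp only [F, Prod.ext_iff]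
  split_ifs with hb <;>
  rcases abs_cases x with ⟨hx, -⟩ | ⟨hx, -⟩ <;> rcases abs_cases y with ⟨hy, -⟩ | ⟨hy, -⟩ <;>
  simp only [hx, hy] <;> grind

end

/-- For `a ≥ 0`: `F_{a,b}` has exactly one fixed point, every periodic point `p`
satisfies `F^[3] p = p` (so every periodic orbit has minimal period 1 or 3), and the
set of all periodic points has at most 7 elements. -/
theorem periodic_points_of_nonneg (a b : ℝ) (ha : 0 ≤ a) :
    (∃! p : ℝ × ℝ, F a b p = p) ∧
    (∀ p : ℝ × ℝ, (∃ n : ℕ, 1 ≤ n ∧ (F a b)^[n] p = p) → (F a b)^[3] p = p) ∧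
    {p : ℝ × ℝ | ∃ n : ℕ, 1 ≤ n ∧ (F a b)^[n] p = p}.Finite ∧
    {p : ℝ × ℝ | ∃ n : ℕ, 1 ≤ n ∧ (F a b)^[n] p = p}.ncard ≤ 7 := by
  have hpt : ∀ p : ℝ × ℝ, (∃ n : ℕ, 1 ≤ n ∧ (F a b)^[n] p = p) →
      (F a b)^[3] p = p ∧ (p.1, (F a b p).1) ∈ cycleSeeds (2 * a - b) :=
    fun p ⟨_, hn, hp⟩ => iterate_three_and_mem_cycleSeeds ha hp hn
  have hsub : {p : ℝ × ℝ | ∃ n : ℕ, 1 ≤ n ∧ (F a b)^[n] p = p} ⊆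
      (fun s : ℝ × ℝ => (s.1, |s.1| + a - s.2)) '' cycleSeeds (2 * a - b) :=
    fun p hp => ⟨_, (hpt p hp).2, mk_fst_F (b := b) p⟩
  have hcard := ((Set.encard_le_encard hsub).trans (Set.encard_image_le _ _)).trans
    (encard_cycleSeeds_le _)
  exact ⟨⟨_, (F_eq_self_iff ha).2 rfl, fun q => (F_eq_self_iff ha).1⟩, fun p hp => (hpt p hp).1,
    Set.encard_le_coe_iff_finite_ncard_le.1 hcard⟩
end

section
/- Let b ≤ 2, let F = F_{1,b}, and set p = (2 − b, 1). Then F(p) = p. Moreover, if −1/2 ≤ b ≤ 2 then F^5(x, y) = p for every (x, y) ∈ ℝ², while if b < −1/2 then F^6(x, y) = p for every (x, y) ∈ ℝ². -/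
lemma F_apply (b u v : ℝ) : F 1 b (u, v) = (|u| - v + 1, u - |v| + b) := rfl

/-- Two steps finish from a nonneg point with large difference. -/
lemma two_step (b u v : ℝ) (hb : b ≤ 2) (hu : 0 ≤ u) (hv : 0 ≤ v)
    (hd : 1 - b ≤ u - v) : (F 1 b)^[2] (u, v) = (2 - b, 1) := by
  have h1 : F 1 b (u, v) = (u - v + 1, u - v + b) := by
    rw [F_apply, abs_of_nonneg hu, abs_of_nonneg hv]
  have h2 : F 1 b (u - v + 1, u - v + b) = (2 - b, 1) := by
    rw [F_apply, abs_of_nonneg (by linarith), abs_of_nonneg (by linarith)]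
    all_goals (simp only [Prod.mk.injEq]; constructor <;> ring_nf)
  rw [Function.iterate_succ_apply, h1, Function.iterate_one, h2]

/-- Three steps finish from a "good" state. -/
lemma three_step (b u v : ℝ) (hb : b ≤ 2) (hu : 0 ≤ u)
    (hd : 1 - b ≤ u - v) (hc : v < 0 → 0 ≤ u + v + b) :
    (F 1 b)^[3] (u, v) = (2 - b, 1) := by
  rcases le_or_gt 0 v with hv | hv
  · have h1 : F 1 b (u, v) = (u - v + 1, u - v + b) := by
      rw [F_apply, abs_of_nonneg hu, abs_of_nonneg hv]
    rw [Function.iterate_succ_apply, h1]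
    exact two_step b _ _ hb (by linarith) (by linarith) (by linarith)
  · have hc' := hc hv
    have h1 : F 1 b (u, v) = (u - v + 1, u + v + b) := by
      rw [F_apply, abs_of_nonneg hu, abs_of_neg hv]; ring_nf
    rw [Function.iterate_succ_apply, h1]
    exact two_step b _ _ hb (by linarith) (by linarith) (by linarith)

/-- After two steps (for `b ≥ -1/2`) we are in a good state. -/
lemma after_two (b x y : ℝ) (hb : b ≤ 2) (hb2 : -1/2 ≤ b) :
    ∃ u v, (F 1 b)^[2] (x, y) = (u, v) ∧ 0 ≤ u ∧ 1 - b ≤ u - v ∧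
      (v < 0 → 0 ≤ u + v + b) := by
  have hx : x ≤ |x| := le_abs_self x
  have hy : y ≤ |y| := le_abs_self y
  set u1 : ℝ := |x| - y + 1 with hu1
  set v1 : ℝ := x - |y| + b with hv1
  have h1 : (F 1 b)^[2] (x, y) = F 1 b (u1, v1) := by
    rw [Function.iterate_succ_apply, Function.iterate_one,
      show F 1 b (x, y) = (u1, v1) from rfl]
  have hd1 : 1 - b ≤ u1 - v1 := by rw [hu1, hv1]; linarith
  rcases le_or_gt 0 u1 with hu | hu <;> rcases le_or_gt 0 v1 with hv | hv
  · refine ⟨u1 - v1 + 1, u1 - v1 + b, ?_, by linarith, by linarith, fun h => by linarith⟩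
    rw [h1, F_apply, abs_of_nonneg hu, abs_of_nonneg hv]
  · refine ⟨u1 - v1 + 1, u1 + v1 + b, ?_, by linarith, by linarith, fun h => by linarith⟩
    rw [h1, F_apply, abs_of_nonneg hu, abs_of_neg hv]
    all_goals (simp only [Prod.mk.injEq]; exact ⟨trivial, by ring⟩)
  · refine ⟨-u1 - v1 + 1, u1 - v1 + b, ?_, by linarith, by linarith, fun h => by linarith⟩
    rw [h1, F_apply, abs_of_neg hu, abs_of_nonneg hv]
  · refine ⟨-u1 - v1 + 1, u1 + v1 + b, ?_, by linarith, by linarith, fun h => by linarith⟩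
    rw [h1, F_apply, abs_of_neg hu, abs_of_neg hv]
    all_goals (simp only [Prod.mk.injEq]; exact ⟨trivial, by ring⟩)

/-- After three steps (any `b ≤ 2`) we are in a good state. -/
lemma after_three (b x y : ℝ) (hb : b ≤ 2) :
    ∃ u v, (F 1 b)^[3] (x, y) = (u, v) ∧ 0 ≤ u ∧ 1 - b ≤ u - v ∧
      (v < 0 → 0 ≤ u + v + b) := by
  have hx : x ≤ |x| := le_abs_self x
  have hy : y ≤ |y| := le_abs_self y
  set u1 : ℝ := |x| - y + 1 with hu1
  set v1 : ℝ := x - |y| + b with hv1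
  have h1 : (F 1 b)^[3] (x, y) = (F 1 b)^[2] (u1, v1) := by
    rw [show (3 : ℕ) = 2 + 1 by norm_num, Function.iterate_add_apply,
      Function.iterate_one, show F 1 b (x, y) = (u1, v1) from rfl]
  have hd1 : 1 - b ≤ u1 - v1 := by rw [hu1, hv1]; linarith
  have hU : u1 ≤ |u1| := le_abs_self u1
  rcases le_or_gt 0 v1 with hv | hv
  · -- v1 ≥ 0 : next state (|u1| - v1 + 1, u1 - v1 + b) with second coord ≥ 1
    set u2 : ℝ := |u1| - v1 + 1 with hu2
    set v2 : ℝ := u1 - v1 + b with hv2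
    have e2 : F 1 b (u1, v1) = (u2, v2) := by
      rw [F_apply, abs_of_nonneg hv, hu2, hv2]
    have h2 : (F 1 b)^[2] (u1, v1) = F 1 b (u2, v2) := by
      rw [Function.iterate_succ_apply, Function.iterate_one, e2]
    have hu2' : 0 ≤ u2 := by rw [hu2]; linarith
    have hv2' : 0 ≤ v2 := by rw [hv2]; linarith
    have hd2 : 1 - b ≤ u2 - v2 := by rw [hu2, hv2]; linarith
    refine ⟨u2 - v2 + 1, u2 - v2 + b, ?_, by linarith, by linarith, fun h => by linarith⟩
    rw [h1, h2, F_apply, abs_of_nonneg hu2', abs_of_nonneg hv2']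
  · -- v1 < 0 : next state (|u1| - v1 + 1, u1 + v1 + b); note |u1| - v1 + 1 ≥ 2 - b
    set u2 : ℝ := |u1| - v1 + 1 with hu2
    set v2 : ℝ := u1 + v1 + b with hv2
    have e2 : F 1 b (u1, v1) = (u2, v2) := by
      rw [F_apply, abs_of_neg hv, hu2, hv2]; ring_nf
    have h2 : (F 1 b)^[2] (u1, v1) = F 1 b (u2, v2) := by
      rw [Function.iterate_succ_apply, Function.iterate_one, e2]
    have hu2' : 2 - b ≤ u2 := by rw [hu2]; linarith
    have hd2 : 1 - b ≤ u2 - v2 := by rw [hu2, hv2]; linarith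
    rcases le_or_gt 0 v2 with hv2' | hv2'
    · refine ⟨u2 - v2 + 1, u2 - v2 + b, ?_, by linarith, by linarith, fun h => by linarith⟩
      rw [h1, h2, F_apply, abs_of_nonneg (by linarith : (0:ℝ) ≤ u2), abs_of_nonneg hv2']
    · refine ⟨u2 - v2 + 1, u2 + v2 + b, ?_, by linarith, by linarith, fun h => by linarith⟩
      rw [h1, h2, F_apply, abs_of_nonneg (by linarith : (0:ℝ) ≤ u2), abs_of_neg hv2']
      all_goals (simp only [Prod.mk.injEq]; exact ⟨trivial, by ring⟩)

/-- For `b ≤ 2` and `F = F_{1,b}`, the point `p = (2 - b, 1)` is fixed; moreover if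
`-1/2 ≤ b ≤ 2` then `F^[5] x = p` for all `x`, while if `b < -1/2` then `F^[6] x = p`
for all `x`. -/
theorem case_a_one (b : ℝ) (hb : b ≤ 2) :
    F 1 b (2 - b, 1) = (2 - b, 1) ∧
    (-1/2 ≤ b → ∀ x : ℝ × ℝ, (F 1 b)^[5] x = (2 - b, 1)) ∧
    (b < -1/2 → ∀ x : ℝ × ℝ, (F 1 b)^[6] x = (2 - b, 1)) := by
  refine ⟨?_, ?_, ?_⟩
  · rw [F_apply, abs_of_nonneg (by linarith : (0:ℝ) ≤ 2 - b), abs_one]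
    all_goals (simp only [Prod.mk.injEq]; constructor <;> ring_nf)
  · intro hb2 x
    obtain ⟨x, y⟩ := x
    obtain ⟨u, v, hs, hu, hd, hc⟩ := after_two b x y hb hb2
    rw [show (5 : ℕ) = 3 + 2 by norm_num, Function.iterate_add_apply, hs]
    exact three_step b u v hb hu hd hc
  · intro hb2 x
    obtain ⟨x, y⟩ := x
    obtain ⟨u, v, hs, hu, hd, hc⟩ := after_three b x y hb
    rw [show (6 : ℕ) = 3 + 3 by norm_num, Function.iterate_add_apply, hs]
    exact three_step b u v hb hu hd hc
end

section
/- Let b > 2 and let F = F_{1,b}. Then q = ((2 − b)/5, (1 + 2b)/5) is a fixed point of F; the sets P = {(b−2, 1), (b−2, 2b−3), (2−b, 1)} and Q = {((b−2)/3, (2b−1)/3), ((2−b)/3, (2b−1)/3), ((2−b)/3, 1)} are periodic orbits of F of minimal period 3; and for every (x, y) ∈ ℝ² with (x, y) ≠ q there exists n ∈ ℕ such that F^n(x, y) ∈ P ∪ Q. -/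
/-- `S` is a periodic orbit of `f` of minimal period `n`: it is the (finite) orbit
`{p, f p, …, f^[n-1] p}` of some periodic point `p` of minimal period `n`. -/
def IsPeriodicOrbit (f : ℝ × ℝ → ℝ × ℝ) (n : ℕ) (S : Set (ℝ × ℝ)) : Prop :=
  ∃ p : ℝ × ℝ, Function.minimalPeriod f p = n ∧ 0 < n ∧
    S = (fun k : ℕ => f^[k] p) '' Set.Iio n

open Function Set

def Reaches {α : Type*} (f : α → α) (S : Set α) (x : α) : Prop :=
  ∃ n, f^[n] x ∈ S

namespace Reaches

variable {α : Type*} {f : α → α} {S : Set α} {x : α}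

lemma of_mem (h : x ∈ S) : Reaches f S x := ⟨0, h⟩

lemma of_iterate {k : ℕ} (h : Reaches f S (f^[k] x)) : Reaches f S x := by
  obtain ⟨n, hn⟩ := h
  exact ⟨n + k, by rwa [iterate_add_apply]⟩

lemma of_apply (h : Reaches f S (f x)) : Reaches f S x := of_iterate (k := 1) h

end Reaches

lemma iterate_eq_of_eqOn {α : Type*} {f g : α → α} {s : Set α} {x : α} (hfg : EqOn f g s)
    (hs : ∀ n, f^[n] x ∈ s) (n : ℕ) : f^[n] x = g^[n] x := by
  induction n with
  | zero => rfl
  | succ n ih => rw [iterate_succ_apply', iterate_succ_apply', hfg (hs n), ih]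

lemma isPeriodicOrbit_three_of_cycle {f : ℝ × ℝ → ℝ × ℝ} {p q r : ℝ × ℝ}
    (hpq : f p = q) (hqr : f q = r) (hrp : f r = p) (hne : q ≠ p) :
    IsPeriodicOrbit f 3 {p, q, r} := by
  have hper : IsPeriodicPt f 3 p := by
    change f (f (f p)) = p
    rw [hpq, hqr, hrp]
  have : Fact (Nat.Prime 3) := ⟨Nat.prime_three⟩
  refine ⟨p, minimalPeriod_eq_prime hper (by rw [IsFixedPt, hpq]; exact hne), by norm_num, ?_⟩
  ext z
  simp only [mem_image, mem_Iio, mem_insert_iff, mem_singleton_iff]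
  constructor
  · rintro (rfl | rfl | rfl)
    exacts [⟨0, by norm_num, rfl⟩, ⟨1, by norm_num, hpq⟩, ⟨2, by norm_num, by simp [hpq, hqr]⟩]
  · rintro ⟨k, hk, rfl⟩
    interval_cases k <;> simp [hpq, hqr]

lemma eq_zero_of_forall_pow_mul_le {a u C : ℝ} (ha : a < -1) (h : ∀ k : ℕ, a ^ k * u ≤ C) :
    u = 0 := by
  have hbound : ∀ k : ℕ, |a| ^ k * |u| ≤ |C| := by
    intro k
    have h0 := h k
    have h1 : a * (a ^ k * u) ≤ C := by rw [← mul_assoc, ← pow_succ']; exact h (k + 1)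
    rw [← abs_pow, ← abs_mul]
    rcases le_or_gt 0 (a ^ k * u) with hv | hv
    · rw [abs_of_nonneg hv]; exact h0.trans (le_abs_self C)
    · rw [abs_of_neg hv]; nlinarith [le_abs_self C]
  by_contra hu
  obtain ⟨k, hk⟩ := pow_unbounded_of_one_lt (|C| / |u|) (by rw [lt_abs]; right; linarith)
  rw [div_lt_iff₀ (abs_pos.2 hu)] at hk
  linarith [hbound k]

lemma forall_of_expanding {P : ℝ → Prop} {c r μ : ℝ} (hμ : 1 < μ) (hc : P c)
    (hfar : ∀ t, r ≤ |t - c| → P t)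
    (hnear : ∀ t, |t - c| < r → P (c + μ * (t - c)) → P t) (t : ℝ) : P t := by
  have key : ∀ k : ℕ, ∀ t, r ≤ μ ^ k * |t - c| → P t := by
    intro k
    induction k with
    | zero => simpa using hfar
    | succ k ih =>
      intro t ht
      rcases le_or_gt r |t - c| with hr | hr
      · exact hfar t hr
      refine hnear t hr (ih _ ?_)
      rwa [add_sub_cancel_left, abs_mul, abs_of_pos (by linarith), ← mul_assoc, ← pow_succ]
  rcases eq_or_ne t c with rfl | htc
  · exact hc
  obtain ⟨k, hk⟩ := pow_unbounded_of_one_lt (r / |t - c|) hμ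
  exact key k t ((div_lt_iff₀ (abs_pos.2 (sub_ne_zero.2 htc))).1 hk).le

section SignBranches

variable {a b x y : ℝ}

lemma F_of_nonneg_of_nonneg (hx : 0 ≤ x) (hy : 0 ≤ y) :
    F a b (x, y) = (x - y + a, x - y + b) := by
  simp [F, abs_of_nonneg hx, abs_of_nonneg hy]

lemma F_of_nonpos_of_nonneg (hx : x ≤ 0) (hy : 0 ≤ y) :
    F a b (x, y) = (-x - y + a, x - y + b) := by
  simp [F, abs_of_nonpos hx, abs_of_nonneg hy]

lemma F_of_nonneg_of_nonpos (hx : 0 ≤ x) (hy : y ≤ 0) :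
    F a b (x, y) = (x - y + a, x + y + b) := by
  simp [F, abs_of_nonneg hx, abs_of_nonpos hy]

lemma F_of_nonpos_of_nonpos (hx : x ≤ 0) (hy : y ≤ 0) :
    F a b (x, y) = (-x - y + a, x + y + b) := by
  simp [F, abs_of_nonpos hx, abs_of_nonpos hy]

end SignBranches

namespace CaseAOne

variable {b t : ℝ}

noncomputable def fixedPt (b : ℝ) : ℝ × ℝ := ((2 - b) / 5, (1 + 2 * b) / 5)

def orbitP (b : ℝ) : Set (ℝ × ℝ) := {(b - 2, 1), (b - 2, 2 * b - 3), (2 - b, 1)}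

def orbitQ (b : ℝ) : Set (ℝ × ℝ) :=
  {((b - 2) / 3, (2 * b - 1) / 3), ((2 - b) / 3, (2 * b - 1) / 3), ((2 - b) / 3, 1)}

def affineBranch (b : ℝ) (p : ℝ × ℝ) : ℝ × ℝ := (-p.1 - p.2 + 1, p.1 - p.2 + b)

lemma eqOn_affineBranch : EqOn (F 1 b) (affineBranch b) (Iic 0 ×ˢ Ici 0) :=
  fun _ hp => F_of_nonpos_of_nonneg (mem_prod.1 hp).1 (mem_prod.1 hp).2

lemma affineBranch_fixedPt : affineBranch b (fixedPt b) = fixedPt b := by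
  simp only [affineBranch, fixedPt]; congr 1 <;> ring

lemma affineBranch_iterate_four (p : ℝ × ℝ) :
    (affineBranch b)^[4] p = fixedPt b + (-4 : ℝ) • (p - fixedPt b) := by
  simp only [iterate_succ, comp_apply, iterate_zero, id_eq, affineBranch, fixedPt]
  ext <;> simp <;> ring

lemma affineBranch_iterate_mul_four (k : ℕ) (p : ℝ × ℝ) :
    (affineBranch b)^[4 * k] p = fixedPt b + (-4 : ℝ) ^ k • (p - fixedPt b) := by
  induction k with
  | zero => simp
  | succ k ih =>
    rw [mul_add_one, add_comm, iterate_add_apply, ih, affineBranch_iterate_four,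
      add_sub_cancel_left, smul_smul, pow_succ']

lemma eq_fixedPt_of_forall_iterate_mem {p : ℝ × ℝ}
    (H : ∀ n, (F 1 b)^[n] p ∈ Iic 0 ×ˢ Ici 0) : p = fixedPt b := by
  have hpow (k : ℕ) : fixedPt b + (-4 : ℝ) ^ k • (p - fixedPt b) ∈ Iic 0 ×ˢ Ici 0 := by
    rw [← affineBranch_iterate_mul_four, ← iterate_eq_of_eqOn eqOn_affineBranch H]
    exact H (4 * k)
  have hu : p.1 - (2 - b) / 5 = 0 := by
    refine eq_zero_of_forall_pow_mul_le (a := -4) (C := -((2 - b) / 5)) (by norm_num) fun k => ?_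
    have := (hpow k).1
    simp only [fixedPt, mem_Iic, Prod.fst_add, Prod.smul_fst, Prod.fst_sub, smul_eq_mul] at this
    linarith
  have hw : (1 + 2 * b) / 5 - p.2 = 0 := by
    refine eq_zero_of_forall_pow_mul_le (a := -4) (C := (1 + 2 * b) / 5) (by norm_num) fun k => ?_
    have := (hpow k).2
    simp only [fixedPt, mem_Ici, Prod.snd_add, Prod.smul_snd, Prod.snd_sub, smul_eq_mul] at this
    linarith
  ext <;> simp only [fixedPt] <;> linarith

lemma F_line_of_neg_one_le (h1 : -1 ≤ t) (htb : -b ≤ t) : F 1 b (t + 1, t + b) = (2 - b, 1) := by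
  rw [F_of_nonneg_of_nonneg (by linarith) (by linarith)]; congr 1 <;> ring

lemma F_line_of_le_neg_one (h1 : t ≤ -1) (htb : -b ≤ t) :
    F 1 b (t + 1, t + b) = (-2 * t - b, 1) := by
  rw [F_of_nonpos_of_nonneg (by linarith) (by linarith)]; congr 1 <;> ring

lemma iterate_three_line_of_le (h1 : t ≤ -1) (htb : -b ≤ t) (h2 : t ≤ -b / 2) :
    (F 1 b)^[3] (t + 1, t + b) = (2 - b, 1) := by
  have e2 : F 1 b (-2 * t - b, 1) = (-2 * t - b, -2 * t - 1) := by
    rw [F_of_nonneg_of_nonneg (by linarith) zero_le_one]; congr 1 <;> ring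
  have e3 : F 1 b (-2 * t - b, -2 * t - 1) = (2 - b, 1) := by
    rw [F_of_nonneg_of_nonneg (by linarith) (by linarith)]; congr 1 <;> ring
  simp only [iterate_succ, comp_apply, iterate_zero, id_eq]
  rw [F_line_of_le_neg_one h1 htb, e2, e3]

lemma iterate_three_line_of_ge (h1 : t ≤ -1) (h2 : -b / 2 ≤ t) :
    (F 1 b)^[3] (t + 1, t + b) = ((4 * t + b + 1) + 1, (4 * t + b + 1) + b) := by
  have e2 : F 1 b (-2 * t - b, 1) = (2 * t + b, -2 * t - 1) := by
    rw [F_of_nonpos_of_nonneg (by linarith) zero_le_one]; congr 1 <;> ring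
  have e3 : F 1 b (2 * t + b, -2 * t - 1) = ((4 * t + b + 1) + 1, (4 * t + b + 1) + b) := by
    rw [F_of_nonneg_of_nonneg (by linarith) (by linarith)]; congr 1 <;> ring
  simp only [iterate_succ, comp_apply, iterate_zero, id_eq]
  rw [F_line_of_le_neg_one h1 (by linarith), e2, e3]

lemma two_sub_one_mem_orbitP : ((2 - b, 1) : ℝ × ℝ) ∈ orbitP b := by
  simp [orbitP]

lemma reaches_line_of_notMem_Ioo (htb : -b ≤ t) (ht : t ∉ Ioo (-b / 2) (-1)) :
    Reaches (F 1 b) (orbitP b ∪ orbitQ b) (t + 1, t + b) := by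
  rcases le_or_gt (-1) t with h1 | h1
  · exact .of_apply (by rw [F_line_of_neg_one_le h1 htb]; exact .of_mem (Or.inl two_sub_one_mem_orbitP))
  · have h2 : t ≤ -b / 2 := not_lt.1 fun h2 => ht ⟨h2, h1⟩
    exact .of_iterate (k := 3)
      (by rw [iterate_three_line_of_le h1.le htb h2]; exact .of_mem (Or.inl two_sub_one_mem_orbitP))

lemma reaches_line (htb : -b ≤ t) :
    Reaches (F 1 b) (orbitP b ∪ orbitQ b) (t + 1, t + b) := by
  -- `t ↦ 4 t + b + 1` is `t ↦ c + 4 (t - c)`, and `c + r = -1`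
  refine forall_of_expanding (P := fun t => -b ≤ t → Reaches (F 1 b) (orbitP b ∪ orbitQ b)
    (t + 1, t + b)) (c := -(b + 1) / 3) (r := (b - 2) / 3) (μ := 4) (by norm_num) ?_ ?_ ?_ t htb
  · refine fun _ => .of_mem (Or.inr (Or.inr (Or.inl ?_)))
    congr 1 <;> ring
  · intro t hfar htb
    refine reaches_line_of_notMem_Ioo htb fun ⟨h1, h2⟩ => ?_
    rcases le_abs'.1 hfar with h | h <;> linarith
  · intro t _ hrec htb
    by_cases ht : t ∈ Ioo (-b / 2) (-1)
    · refine .of_iterate (k := 3) ?_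
      rw [iterate_three_line_of_ge ht.2.le ht.1.le]
      convert hrec (by linarith [ht.1]) using 2 <;> ring
    · exact reaches_line_of_notMem_Ioo htb ht

lemma reaches_of_nonneg_of_nonneg {x y : ℝ} (hx : 0 ≤ x) (hy : 0 ≤ y) (h : -b ≤ x - y) :
    Reaches (F 1 b) (orbitP b ∪ orbitQ b) (x, y) :=
  .of_apply (by rw [F_of_nonneg_of_nonneg hx hy]; exact reaches_line h)

lemma reaches_of_nonneg_of_neg (hb : 0 < b) {x y : ℝ} (hx : 0 ≤ x) (hy : y < 0) :
    Reaches (F 1 b) (orbitP b ∪ orbitQ b) (x, y) := by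
  obtain ⟨N, hN⟩ := exists_nat_ge (-y / b)
  rw [div_le_iff₀ hb] at hN
  induction N generalizing x y with
  | zero => simp only [CharP.cast_eq_zero, zero_mul] at hN; linarith
  | succ N ih =>
    refine .of_apply ?_
    rw [F_of_nonneg_of_nonpos hx hy.le]
    rcases lt_or_ge (x + y + b) 0 with hy' | hy'
    · exact ih (by linarith) hy' (by push_cast at hN; linarith)
    · exact reaches_of_nonneg_of_nonneg (by linarith) hy' (by linarith)

lemma reaches_of_nonneg_fst (hb : 1 ≤ b) {p : ℝ × ℝ} (hp : 0 ≤ p.1) :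
    Reaches (F 1 b) (orbitP b ∪ orbitQ b) p := by
  obtain ⟨x, y⟩ := p
  rcases lt_or_ge y 0 with hy | hy
  · exact reaches_of_nonneg_of_neg (by linarith) hp hy
  refine .of_apply ?_
  rw [F_of_nonneg_of_nonneg hp hy]
  rcases le_or_gt (-b) (x - y) with ht | ht
  · exact reaches_line ht
  refine .of_apply ?_
  rw [F_of_nonpos_of_nonpos (by linarith) (by linarith)]
  rcases lt_or_ge ((x - y + 1) + (x - y + b) + b) 0 with hy' | hy'
  · exact reaches_of_nonneg_of_neg (by linarith) (by linarith) hy'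
  · exact reaches_of_nonneg_of_nonneg (by linarith) hy' (by linarith)

lemma reaches_of_ne_fixedPt (hb : 1 ≤ b) {p : ℝ × ℝ} (hp : p ≠ fixedPt b) :
    Reaches (F 1 b) (orbitP b ∪ orbitQ b) p := by
  by_contra hnot
  refine hp (eq_fixedPt_of_forall_iterate_mem fun n => mem_prod.2 ⟨?_, ?_⟩)
  · by_contra h
    exact hnot (.of_iterate (reaches_of_nonneg_fst hb (not_le.1 h).le))
  · by_contra h
    -- `F` maps `{y < 0}` into `{x > 0}`
    refine hnot (.of_iterate (k := n + 1) (reaches_of_nonneg_fst hb ?_))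
    rw [iterate_succ_apply', F]
    linarith [abs_nonneg ((F 1 b)^[n] p).1, show ((F 1 b)^[n] p).2 < 0 from not_le.1 h]

lemma F_fixedPt (hb : 2 ≤ b) : F 1 b (fixedPt b) = fixedPt b := by
  have hq : fixedPt b ∈ Iic 0 ×ˢ Ici 0 :=
    mem_prod.2 ⟨show (2 - b) / 5 ≤ 0 by linarith, show 0 ≤ (1 + 2 * b) / 5 by linarith⟩
  rw [eqOn_affineBranch hq, affineBranch_fixedPt]

lemma isPeriodicOrbit_orbitP (hb : 2 < b) : IsPeriodicOrbit (F 1 b) 3 (orbitP b) := by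
  refine isPeriodicOrbit_three_of_cycle ?_ ?_ ?_ fun h => by linarith [congrArg Prod.snd h]
  · rw [F_of_nonneg_of_nonneg (by linarith) zero_le_one]; congr 1 <;> ring
  · rw [F_of_nonneg_of_nonneg (by linarith) (by linarith)]; congr 1 <;> ring
  · rw [F_of_nonpos_of_nonneg (by linarith) zero_le_one]; congr 1 <;> ring

lemma isPeriodicOrbit_orbitQ (hb : 2 < b) : IsPeriodicOrbit (F 1 b) 3 (orbitQ b) := by
  refine isPeriodicOrbit_three_of_cycle ?_ ?_ ?_ fun h => by linarith [congrArg Prod.fst h]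
  · rw [F_of_nonneg_of_nonneg (by linarith) (by linarith)]; congr 1 <;> ring
  · rw [F_of_nonpos_of_nonneg (by linarith) (by linarith)]; congr 1 <;> ring
  · rw [F_of_nonpos_of_nonneg (by linarith) zero_le_one]; congr 1 <;> ring

end CaseAOne

open CaseAOne in
/-- For `b > 2` and `F = F_{1,b}`: `q` is a fixed point, `P` and `Q` are 3-periodic
orbits, and every point other than `q` eventually lands in `P ∪ Q`. -/
theorem case_a_one_b_gt_two (b : ℝ) (hb : 2 < b) :
    F 1 b ((2 - b)/5, (1 + 2*b)/5) = ((2 - b)/5, (1 + 2*b)/5) ∧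
    IsPeriodicOrbit (F 1 b) 3 {(b-2, 1), (b-2, 2*b-3), (2-b, 1)} ∧
    IsPeriodicOrbit (F 1 b) 3
      {((b-2)/3, (2*b-1)/3), ((2-b)/3, (2*b-1)/3), ((2-b)/3, 1)} ∧
    ∀ x : ℝ × ℝ, x ≠ ((2 - b)/5, (1 + 2*b)/5) →
      ∃ n : ℕ, (F 1 b)^[n] x ∈
        (({(b-2, 1), (b-2, 2*b-3), (2-b, 1)} : Set (ℝ × ℝ)) ∪
         {((b-2)/3, (2*b-1)/3), ((2-b)/3, (2*b-1)/3), ((2-b)/3, 1)}) := by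
  exact ⟨F_fixedPt hb.le, isPeriodicOrbit_orbitP hb, isPeriodicOrbit_orbitQ hb,
    fun _ hx => reaches_of_ne_fixedPt (by linarith) hx⟩
end

section
/- Let F = F_{0,0}. Then (0, 0) is a fixed point of F and F^5(x, y) = (0, 0) for every (x, y) ∈ ℝ². More precisely: (i) if y < 0 then F^4(x, y) = (0, 0); (ii) for every x > 0, F^2(x, 0) = (0, 0); (iii) for every x > 0, F^4(−x, 0) = (0, 0). -/
theorem Function.iterate_eq_of_isFixedPt_of_le {α : Type*} {f : α → α} {z p : α} {n m : ℕ}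
    (hz : IsFixedPt f z) (hp : f^[n] p = z) (hnm : n ≤ m) : f^[m] p = z := by
  obtain ⟨k, rfl⟩ := Nat.exists_eq_add_of_le hnm
  rw [add_comm, Function.iterate_add_apply, hp, Function.iterate_fixed hz]

namespace F

theorem isFixedPt_zero : Function.IsFixedPt (F 0 0) (0, 0) := by
  simp [Function.IsFixedPt, F]

theorem zero_zero_apply (x y : ℝ) : F 0 0 (x, y) = (|x| - y, x - |y|) := by
  simp [F]

theorem zero_zero_apply_of_neg {x y : ℝ} (hy : y < 0) : F 0 0 (x, y) = (|x| - y, x + y) := by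
  rw [zero_zero_apply, abs_of_neg hy, sub_neg_eq_add]

theorem iterate_two_of_nonneg_of_le {x y : ℝ} (hy : 0 ≤ y) (hyx : y ≤ x) :
    (F 0 0)^[2] (x, y) = (0, 0) := by
  have hdiag : F 0 0 (x, y) = (x - y, x - y) := by
    rw [zero_zero_apply, abs_of_nonneg (hy.trans hyx), abs_of_nonneg hy]
  rw [Function.iterate_succ_apply, Function.iterate_one, hdiag, zero_zero_apply,
    abs_of_nonneg (sub_nonneg.2 hyx), sub_self]

theorem iterate_three_of_neg_of_nonneg_add {x y : ℝ} (hy : y < 0) (hxy : 0 ≤ x + y) :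
    (F 0 0)^[3] (x, y) = (0, 0) := by
  have hle : x + y ≤ |x| - y := by linarith [le_abs_self x]
  rw [Function.iterate_succ_apply, zero_zero_apply_of_neg hy]
  exact iterate_two_of_nonneg_of_le hxy hle

theorem iterate_four_of_neg {x y : ℝ} (hy : y < 0) : (F 0 0)^[4] (x, y) = (0, 0) := by
  rcases le_or_gt 0 (x + y) with hxy | hxy
  · exact Function.iterate_eq_of_isFixedPt_of_le isFixedPt_zero
      (iterate_three_of_neg_of_nonneg_add hy hxy) (by norm_num)
  · rw [Function.iterate_succ_apply, zero_zero_apply_of_neg hy]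
    exact iterate_three_of_neg_of_nonneg_add hxy (by linarith [neg_abs_le x])

theorem iterate_five (p : ℝ × ℝ) : (F 0 0)^[5] p = (0, 0) := by
  obtain ⟨x, y⟩ := p
  have absorb {n : ℕ} (hn : n ≤ 5) (h : (F 0 0)^[n] (x, y) = (0, 0)) :
      (F 0 0)^[5] (x, y) = (0, 0) :=
    Function.iterate_eq_of_isFixedPt_of_le isFixedPt_zero h hn
  rcases lt_or_ge y 0 with hy | hy
  · exact absorb (by norm_num) (iterate_four_of_neg hy)
  rcases le_or_gt y x with hyx | hxy
  · exact absorb (by norm_num) (iterate_two_of_nonneg_of_le hy hyx)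
  · rw [Function.iterate_succ_apply, zero_zero_apply, abs_of_nonneg hy]
    exact iterate_four_of_neg (sub_neg.2 hxy)

end F

/-- For `F = F_{0,0}`: `(0,0)` is a fixed point and `F^[5] x = (0,0)` for every `x`;
more precisely, (i) if `y < 0` then `F^[4] (x,y) = (0,0)`, (ii) for `x > 0`,
`F^[2] (x,0) = (0,0)`, and (iii) for `x > 0`, `F^[4] (-x,0) = (0,0)`. -/
theorem case_a_zero_b_zero :
    F 0 0 (0, 0) = (0, 0) ∧
    (∀ x : ℝ × ℝ, (F 0 0)^[5] x = (0, 0)) ∧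
    (∀ x y : ℝ, y < 0 → (F 0 0)^[4] (x, y) = (0, 0)) ∧
    (∀ x : ℝ, 0 < x → (F 0 0)^[2] (x, 0) = (0, 0)) ∧
    (∀ x : ℝ, 0 < x → (F 0 0)^[4] (-x, 0) = (0, 0)) := by
  refine ⟨F.isFixedPt_zero, F.iterate_five, fun x y hy => F.iterate_four_of_neg hy,
    fun x hx => F.iterate_two_of_nonneg_of_le le_rfl hx.le, fun x hx => ?_⟩
  have hstep : F 0 0 (-x, 0) = (x, -x) := by
    rw [F.zero_zero_apply, abs_neg, abs_of_pos hx, abs_zero]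
    simp
  rw [Function.iterate_succ_apply, hstep]
  exact F.iterate_three_of_neg_of_nonneg_add (neg_neg_of_pos hx) (add_neg_cancel x).ge
end

section
/- Let b ≤ −2 and let F = F_{−1,b}. Then: (i) (−b, −1) is a fixed point of F; (ii) the set P = {(−b−2, −1), (−b−2, −3), (−b, −5), (−b+4, −5), (−b+8, −1), (−b+8, 7), (−b, 1)} is a periodic orbit of F of minimal period 7, with F mapping each listed point to the next one and the last listed point to the first; (iii) the set Q = {(−b−16/15, −1/15), (−b−2, −17/15), (−b−28/15, −47/15), (−b+4/15, −5), (−b+64/15, −71/15), (−b+8, −7/15), (−b+112/15, 113/15)} is a periodic orbit of F of minimal period 7, with F mapping each listed point to the next one and the last listed point to the first. -/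
/-!
For `b ≤ -2` every listed point has nonnegative first coordinate, and on the half-plane `x ≥ 0`
the map is `F_{a,b}(x, y) = (x - y + a, x - |y| + b)`; so each step of the two cycles is an
identity between affine expressions in `b`. Since 7 is prime, a point that returns after 7 steps
without being fixed has minimal period exactly 7.
-/

open Function Set

lemma isPeriodicOrbit_of_cycle7 {f : ℝ × ℝ → ℝ × ℝ} {p₀ p₁ p₂ p₃ p₄ p₅ p₆ : ℝ × ℝ}
    (h₀ : f p₀ = p₁) (h₁ : f p₁ = p₂) (h₂ : f p₂ = p₃) (h₃ : f p₃ = p₄)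
    (h₄ : f p₄ = p₅) (h₅ : f p₅ = p₆) (h₆ : f p₆ = p₀) (hne : p₀ ≠ p₁) :
    IsPeriodicOrbit f 7 {p₀, p₁, p₂, p₃, p₄, p₅, p₆} := by
  have : Fact (Nat.Prime 7) := ⟨by norm_num⟩
  have hper : IsPeriodicPt f 7 p₀ := by
    simp only [IsPeriodicPt, IsFixedPt, iterate_succ_apply', iterate_zero_apply,
      h₀, h₁, h₂, h₃, h₄, h₅, h₆]
  have hfix : ¬IsFixedPt f p₀ := fun h => hne (h.symm.trans h₀)
  refine ⟨p₀, minimalPeriod_eq_prime hper hfix, by norm_num, ?_⟩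
  have hIio : (Iio 7 : Set ℕ) = {0, 1, 2, 3, 4, 5, 6} := by
    ext n
    simp only [mem_Iio, mem_insert_iff, mem_singleton_iff]
    omega
  simp [hIio, image_insert_eq, iterate_succ_apply', h₀, h₁, h₂, h₃, h₄, h₅]

lemma F_of_nonneg {a b x y : ℝ} (hx : 0 ≤ x) : F a b (x, y) = (x - y + a, x - |y| + b) := by
  rw [F, abs_of_nonneg hx]

section Orbits

variable {b : ℝ}

lemma isFixedPt_F_neg_one (hb : b ≤ 0) : IsFixedPt (F (-1) b) (-b, -1) := by
  rw [IsFixedPt, F_of_nonneg (by linarith)]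
  ext <;> norm_num
  ring

lemma F_neg_one_cycle_P (hb : b ≤ -2) :
    F (-1) b (-b-2, -1) = (-b-2, -3) ∧
    F (-1) b (-b-2, -3) = (-b, -5) ∧
    F (-1) b (-b, -5) = (-b+4, -5) ∧
    F (-1) b (-b+4, -5) = (-b+8, -1) ∧
    F (-1) b (-b+8, -1) = (-b+8, 7) ∧
    F (-1) b (-b+8, 7) = (-b, 1) ∧
    F (-1) b (-b, 1) = (-b-2, -1) := by
  refine ⟨?_, ?_, ?_, ?_, ?_, ?_, ?_⟩ <;> rw [F_of_nonneg (by linarith)] <;>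
    ext <;> norm_num <;> ring

lemma F_neg_one_cycle_Q (hb : b ≤ -2) :
    F (-1) b (-b-16/15, -1/15) = (-b-2, -17/15) ∧
    F (-1) b (-b-2, -17/15) = (-b-28/15, -47/15) ∧
    F (-1) b (-b-28/15, -47/15) = (-b+4/15, -5) ∧
    F (-1) b (-b+4/15, -5) = (-b+64/15, -71/15) ∧
    F (-1) b (-b+64/15, -71/15) = (-b+8, -7/15) ∧
    F (-1) b (-b+8, -7/15) = (-b+112/15, 113/15) ∧
    F (-1) b (-b+112/15, 113/15) = (-b-16/15, -1/15) := by
  refine ⟨?_, ?_, ?_, ?_, ?_, ?_, ?_⟩ <;> rw [F_of_nonneg (by linarith)] <;>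
    ext <;> norm_num <;> ring

end Orbits

/-- For `b ≤ -2` and `F = F_{-1,b}`: `(-b, -1)` is a fixed point, and the sets `P`
and `Q` below are periodic orbits of minimal period 7, `F` mapping each listed point
to the next one and the last to the first. -/
theorem case_b_le_neg_two (b : ℝ) (hb : b ≤ -2) :
    F (-1) b (-b, -1) = (-b, -1) ∧
    (IsPeriodicOrbit (F (-1) b) 7
        {(-b-2, -1), (-b-2, -3), (-b, -5), (-b+4, -5), (-b+8, -1), (-b+8, 7), (-b, 1)} ∧
      F (-1) b (-b-2, -1) = (-b-2, -3) ∧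
      F (-1) b (-b-2, -3) = (-b, -5) ∧
      F (-1) b (-b, -5) = (-b+4, -5) ∧
      F (-1) b (-b+4, -5) = (-b+8, -1) ∧
      F (-1) b (-b+8, -1) = (-b+8, 7) ∧
      F (-1) b (-b+8, 7) = (-b, 1) ∧
      F (-1) b (-b, 1) = (-b-2, -1)) ∧
    (IsPeriodicOrbit (F (-1) b) 7
        {(-b-16/15, -1/15), (-b-2, -17/15), (-b-28/15, -47/15), (-b+4/15, -5),
         (-b+64/15, -71/15), (-b+8, -7/15), (-b+112/15, 113/15)} ∧
      F (-1) b (-b-16/15, -1/15) = (-b-2, -17/15) ∧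
      F (-1) b (-b-2, -17/15) = (-b-28/15, -47/15) ∧
      F (-1) b (-b-28/15, -47/15) = (-b+4/15, -5) ∧
      F (-1) b (-b+4/15, -5) = (-b+64/15, -71/15) ∧
      F (-1) b (-b+64/15, -71/15) = (-b+8, -7/15) ∧
      F (-1) b (-b+8, -7/15) = (-b+112/15, 113/15) ∧
      F (-1) b (-b+112/15, 113/15) = (-b-16/15, -1/15)) := by
  obtain ⟨hP₀, hP₁, hP₂, hP₃, hP₄, hP₅, hP₆⟩ := F_neg_one_cycle_P hb
  obtain ⟨hQ₀, hQ₁, hQ₂, hQ₃, hQ₄, hQ₅, hQ₆⟩ := F_neg_one_cycle_Q hb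
  refine ⟨isFixedPt_F_neg_one (by linarith),
    ⟨isPeriodicOrbit_of_cycle7 hP₀ hP₁ hP₂ hP₃ hP₄ hP₅ hP₆ ?_, hP₀, hP₁, hP₂, hP₃, hP₄, hP₅, hP₆⟩,
    ⟨isPeriodicOrbit_of_cycle7 hQ₀ hQ₁ hQ₂ hQ₃ hQ₄ hQ₅ hQ₆ ?_, hQ₀, hQ₁, hQ₂, hQ₃, hQ₄, hQ₅, hQ₆⟩⟩
  all_goals norm_num [Prod.ext_iff]
end

section
/- Let b ∈ ℝ with −3/4 < b < 0 and let F = F_{−1,b}. Then (−b−2, −1) is a periodic point of F of minimal period 5. If moreover −1/8 ≤ b, then (b, −1) is a periodic point of F of minimal period 7. -/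
open Function

lemma F_mk_of_abs_eq {a b x y u v : ℝ} (hx : |x| = u) (hy : |y| = v) :
    F a b (x, y) = (u - y + a, x - v + b) := by
  rw [F, hx, hy]

section

variable {b : ℝ}

lemma isPeriodicPt_F_five (hb1 : -3/4 < b) (hb2 : b < 0) :
    IsPeriodicPt (F (-1) b) 5 (-b-2, -1) := by
  have h0 : F (-1) b (-b-2, -1) = (b+2, -3) := by
    rw [F_mk_of_abs_eq (abs_of_neg (by linarith)) (abs_of_neg (by norm_num))]; congr 1 <;> ring
  have h1 : F (-1) b (b+2, -3) = (b+4, 2*b-1) := by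
    rw [F_mk_of_abs_eq (abs_of_pos (by linarith)) (abs_of_neg (by norm_num))]; congr 1 <;> ring
  have h2 : F (-1) b (b+4, 2*b-1) = (4-b, 4*b+3) := by
    rw [F_mk_of_abs_eq (abs_of_pos (by linarith)) (abs_of_neg (by linarith))]; congr 1 <;> ring
  have h3 : F (-1) b (4-b, 4*b+3) = (-5*b, 1-4*b) := by
    rw [F_mk_of_abs_eq (abs_of_pos (by linarith)) (abs_of_pos (by linarith))]; congr 1 <;> ring
  have h4 : F (-1) b (-5*b, 1-4*b) = (-b-2, -1) := by
    rw [F_mk_of_abs_eq (abs_of_pos (by linarith)) (abs_of_pos (by linarith))]; congr 1 <;> ring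
  simp only [IsPeriodicPt, IsFixedPt, iterate_succ_apply, iterate_zero_apply, h0, h1, h2, h3, h4]

lemma isPeriodicPt_F_seven (hb2 : b < 0) (hb3 : -1/8 ≤ b) :
    IsPeriodicPt (F (-1) b) 7 (b, -1) := by
  have h0 : F (-1) b (b, -1) = (-b, 2*b-1) := by
    rw [F_mk_of_abs_eq (abs_of_neg hb2) (abs_of_neg (by norm_num))]; congr 1 <;> ring
  have h1 : F (-1) b (-b, 2*b-1) = (-3*b, 2*b-1) := by
    rw [F_mk_of_abs_eq (abs_of_pos (by linarith)) (abs_of_neg (by linarith))]; congr 1 <;> ring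
  have h2 : F (-1) b (-3*b, 2*b-1) = (-5*b, -1) := by
    rw [F_mk_of_abs_eq (abs_of_pos (by linarith)) (abs_of_neg (by linarith))]; congr 1 <;> ring
  have h3 : F (-1) b (-5*b, -1) = (-5*b, -4*b-1) := by
    rw [F_mk_of_abs_eq (abs_of_pos (by linarith)) (abs_of_neg (by norm_num))]; congr 1 <;> ring
  have h4 : F (-1) b (-5*b, -4*b-1) = (-b, -8*b-1) := by
    rw [F_mk_of_abs_eq (abs_of_pos (by linarith)) (abs_of_neg (by linarith))]; congr 1 <;> ring
  have h5 : F (-1) b (-b, -8*b-1) = (7*b, -8*b-1) := by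
    rw [F_mk_of_abs_eq (abs_of_pos (by linarith)) (abs_of_nonpos (by linarith))]; congr 1 <;> ring
  have h6 : F (-1) b (7*b, -8*b-1) = (b, -1) := by
    rw [F_mk_of_abs_eq (abs_of_neg (by linarith)) (abs_of_nonpos (by linarith))]; congr 1 <;> ring
  simp only [IsPeriodicPt, IsFixedPt, iterate_succ_apply, iterate_zero_apply,
    h0, h1, h2, h3, h4, h5, h6]

lemma snd_eq_of_isFixedPt_F {a x y : ℝ} (h : IsFixedPt (F a b) (x, y)) : x - |y| + b = y :=
  congrArg Prod.snd h

lemma not_isFixedPt_F_five : ¬IsFixedPt (F (-1) b) (-b-2, -1) := fun h => by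
  have := snd_eq_of_isFixedPt_F h
  norm_num at this
  linarith

lemma not_isFixedPt_F_seven (hb2 : b < 0) : ¬IsFixedPt (F (-1) b) (b, -1) := fun h => by
  have := snd_eq_of_isFixedPt_F h
  norm_num at this
  linarith

end

/-- For `-3/4 < b < 0` and `F = F_{-1,b}`: the point `(-b-2, -1)` is periodic of
minimal period 5, and if moreover `-1/8 ≤ b` then `(b, -1)` is periodic of minimal
period 7. -/
theorem minimal_periods_case_c (b : ℝ) (hb1 : -3/4 < b) (hb2 : b < 0) :
    Function.minimalPeriod (F (-1) b) (-b-2, -1) = 5 ∧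
    (-1/8 ≤ b → Function.minimalPeriod (F (-1) b) (b, -1) = 7) := by
  have : Fact (Nat.Prime 5) := ⟨by norm_num⟩
  have : Fact (Nat.Prime 7) := ⟨by norm_num⟩
  exact ⟨minimalPeriod_eq_prime (isPeriodicPt_F_five hb1 hb2) not_isFixedPt_F_five,
    fun hb3 => minimalPeriod_eq_prime (isPeriodicPt_F_seven hb2 hb3) (not_isFixedPt_F_seven hb2)⟩
end

section
/- Let F = F_{−1,1}. Then the sets P = {(−3, −1), (3, −3), (5, 1), (3, 5)} and X = {(−1, 1), (−1, −1), (1, −1), (1, 1)} are periodic orbits of F of minimal period 4, and the set S = {(−1/3, −1/3), (−1/3, 1/3), (−1, 1/3)} is a periodic orbit of F of minimal period 3. -/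
/-!
Each of the three sets is a cycle of `F_{-1,1}`, as direct evaluation shows (the signs of the
coordinates fix the branch of each absolute value). Since 3 is prime and 4 = 2², the minimal
period of a point on a 3-cycle is 3 as soon as it is not fixed, and on a 4-cycle it is 4 as soon
as the point is not 2-periodic.
-/

open Function

section Cycles

variable {α : Type*} {f : α → α} {a b c d : α}

theorem Function.minimalPeriod_eq_three_of_cycle (hab : f a = b) (hbc : f b = c) (hca : f c = a)
    (hne : a ≠ b) : minimalPeriod f a = 3 :=
  minimalPeriod_eq_prime (by simp [IsPeriodicPt, IsFixedPt, hab, hbc, hca])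
    (by rw [IsFixedPt, hab]; exact hne.symm)

theorem Function.minimalPeriod_eq_four_of_cycle (hab : f a = b) (hbc : f b = c) (hcd : f c = d)
    (hda : f d = a) (hne : a ≠ c) : minimalPeriod f a = 4 :=
  minimalPeriod_eq_prime_pow (p := 2) (k := 1)
    (by simpa [IsPeriodicPt, IsFixedPt, hab, hbc] using hne.symm)
    (by simp [IsPeriodicPt, IsFixedPt, hab, hbc, hcd, hda])

end Cycles

section Orbits

variable {f : ℝ × ℝ → ℝ × ℝ} {a b c d : ℝ × ℝ}

theorem isPeriodicOrbit_of_three_cycle (hab : f a = b) (hbc : f b = c) (hca : f c = a)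
    (hne : a ≠ b) : IsPeriodicOrbit f 3 {a, b, c} := by
  refine ⟨a, minimalPeriod_eq_three_of_cycle hab hbc hca hne, by norm_num, ?_⟩
  have hIio : Set.Iio 3 = {0, 1, 2} := by
    ext; simp only [Set.mem_Iio, Set.mem_insert_iff, Set.mem_singleton_iff]; omega
  rw [hIio]
  simp [Set.image_insert_eq, hab, hbc]

theorem isPeriodicOrbit_of_four_cycle (hab : f a = b) (hbc : f b = c) (hcd : f c = d)
    (hda : f d = a) (hne : a ≠ c) : IsPeriodicOrbit f 4 {a, b, c, d} := by
  refine ⟨a, minimalPeriod_eq_four_of_cycle hab hbc hcd hda hne, by norm_num, ?_⟩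
  have hIio : Set.Iio 4 = {0, 1, 2, 3} := by
    ext; simp only [Set.mem_Iio, Set.mem_insert_iff, Set.mem_singleton_iff]; omega
  rw [hIio]
  simp [Set.image_insert_eq, hab, hbc, hcd]

end Orbits

/-- For `F = F_{-1,1}`: `P` and `X` are 4-periodic orbits and `S` is a 3-periodic
orbit. -/
theorem case_b_eq_one :
    IsPeriodicOrbit (F (-1) 1) 4 {(-3, -1), (3, -3), (5, 1), (3, 5)} ∧
    IsPeriodicOrbit (F (-1) 1) 4 {(-1, 1), (-1, -1), (1, -1), (1, 1)} ∧
    IsPeriodicOrbit (F (-1) 1) 3 {(-1/3, -1/3), (-1/3, 1/3), (-1, 1/3)} := by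
  refine ⟨isPeriodicOrbit_of_four_cycle ?_ ?_ ?_ ?_ ?_,
    isPeriodicOrbit_of_four_cycle ?_ ?_ ?_ ?_ ?_, isPeriodicOrbit_of_three_cycle ?_ ?_ ?_ ?_⟩
  all_goals norm_num [F, abs_of_nonneg, abs_of_neg]
end
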